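/- Let m, n ≥ 1, let D_0, D_1, D_2 be m × m complex matrices, and let p_0, p_1, p_2 be homogeneous polynomials of degree n in ℂ[x_0,x_1,x_2]. For each cyclic pair, let B(p_1,p_2), B(p_2,p_0), B(p_0,p_1) be blown Bezout matrices arising from Bezout decompositions of (p_1,p_2), (p_2,p_0), (p_0,p_1) respectively. Let x, y ∈ ℂ³ and e, h ∈ ℂ^m satisfy (x_0 D_0 + x_1 D_1 + x_2 D_2)^T e = 0 and (y_0 D_0 + y_1 D_1 + y_2 D_2) h = 0. Then (x_1 y_2 − x_2 y_1) · V_n(x,e)^T ( p_0(x) B(p_1,p_2) + p_1(x) B(p_2,p_0) + p_2(x) B(p_0,p_1) ) V_n(y,h) = 0; in particular, if x_1 y_2 − x_2 y_1 ≠ 0 then V_n(x,e)^T ( p_0(x) B(p_1,p_2) + p_1(x) B(p_2,p_0) + p_2(x) B(p_0,p_1) ) V_n(y,h) = 0. -/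

import Mathlib

/-! The kernel conditions say that `dₖ := eᵀ Dₖ h` is orthogonal to both `x` and `y`, so `d` is
parallel to `x × y`. Pairing the Bezout identity of `(p, q)` against the Vandermonde vectors
therefore turns each `βᵏ`-term into `βᵏ (x × y)ₖ`, and, after multiplying by `(x × y)₀`,
`(x × y)₀ · V(x,e)ᵀ B(p,q) V(y,h) = d₀ (p(x)q(y) − q(x)p(y))`. The cyclic combination of these
right-hand sides with weights `p₀(x), p₁(x), p₂(x)` vanishes identically. -/

open Matrix

/-- Multi-indices `α ∈ ℕ³` (as triples) of total degree `k`. -/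
abbrev TriIdx (k : ℕ) : Type := {α : ℕ × ℕ × ℕ // α.1 + α.2.1 + α.2.2 = k}

noncomputable instance (k : ℕ) : Fintype (TriIdx k) :=
  Fintype.ofInjective
    (fun α : TriIdx k =>
      ((⟨α.1.1, by have := α.2; omega⟩ : Fin (k + 1)),
       (⟨α.1.2.1, by have := α.2; omega⟩ : Fin (k + 1)),
       (⟨α.1.2.2, by have := α.2; omega⟩ : Fin (k + 1))))
    (by
      rintro ⟨⟨a1, a2, a3⟩, ha⟩ ⟨⟨b1, b2, b3⟩, hb⟩ hEq
      simp only [Prod.mk.injEq, Fin.mk.injEq] at hEq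
      exact Subtype.ext (by simp [hEq.1, hEq.2.1, hEq.2.2]))

/-- A Bezout decomposition of a pair `(p,q)` of homogeneous polynomials of degree `n` in
`ℂ[x₀,x₁,x₂]`. -/
def IsBezoutDecomp (n : ℕ) (p q : MvPolynomial (Fin 3) ℂ)
    (β0 β1 β2 : TriIdx (n - 1) → TriIdx (n - 1) → ℂ) : Prop :=
  (∀ i j, β0 i j = β0 j i) ∧ (∀ i j, β1 i j = β1 j i) ∧ (∀ i j, β2 i j = β2 j i) ∧
  ∀ x₀ x₁ x₂ y₀ y₁ y₂ : ℂ,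
    MvPolynomial.eval ![x₀, x₁, x₂] p * MvPolynomial.eval ![y₀, y₁, y₂] q -
        MvPolynomial.eval ![x₀, x₁, x₂] q * MvPolynomial.eval ![y₀, y₁, y₂] p =
      ∑ i : TriIdx (n - 1), ∑ j : TriIdx (n - 1),
        (x₀ ^ i.1.1 * x₁ ^ i.1.2.1 * x₂ ^ i.1.2.2) *
          (y₀ ^ j.1.1 * y₁ ^ j.1.2.1 * y₂ ^ j.1.2.2) *
          (β0 i j * (x₁ * y₂ - x₂ * y₁) + β1 i j * (x₂ * y₀ - x₀ * y₂) +
            β2 i j * (x₀ * y₁ - x₁ * y₀))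

/-- The bilinear pairing `V_n(x,e)ᵀ (β⁰⊗D₀ + β¹⊗D₁ + β²⊗D₂) V_n(y,h)` of two Vandermonde
vectors on the curve against a blown Bezout matrix. -/
noncomputable def blownPairing (m n : ℕ) (D₀ D₁ D₂ : Matrix (Fin m) (Fin m) ℂ)
    (β0 β1 β2 : TriIdx (n - 1) → TriIdx (n - 1) → ℂ)
    (x₀ x₁ x₂ y₀ y₁ y₂ : ℂ) (e h : Fin m → ℂ) : ℂ :=
  ∑ i : TriIdx (n - 1), ∑ j : TriIdx (n - 1),
    (x₀ ^ i.1.1 * x₁ ^ i.1.2.1 * x₂ ^ i.1.2.2) *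
      (y₀ ^ j.1.1 * y₁ ^ j.1.2.1 * y₂ ^ j.1.2.2) *
      (β0 i j * (e ⬝ᵥ D₀.mulVec h) + β1 i j * (e ⬝ᵥ D₁.mulVec h) +
        β2 i j * (e ⬝ᵥ D₂.mulVec h))

section Pencil

variable {R ι : Type*} [CommRing R] [Fintype ι] (D₀ D₁ D₂ : Matrix ι ι R) (e h : ι → R)

theorem dotProduct_pencil_mulVec (a b c : R) :
    e ⬝ᵥ (a • D₀ + b • D₁ + c • D₂) *ᵥ h =
      a * (e ⬝ᵥ D₀ *ᵥ h) + b * (e ⬝ᵥ D₁ *ᵥ h) + c * (e ⬝ᵥ D₂ *ᵥ h) := by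
  simp only [add_mulVec, smul_mulVec, dotProduct_add, dotProduct_smul, smul_eq_mul]

variable {D₀ D₁ D₂ e h}

theorem pencil_pairing_eq_zero_of_transpose_mulVec {a b c : R}
    (he : (a • D₀ + b • D₁ + c • D₂)ᵀ *ᵥ e = 0) :
    a * (e ⬝ᵥ D₀ *ᵥ h) + b * (e ⬝ᵥ D₁ *ᵥ h) + c * (e ⬝ᵥ D₂ *ᵥ h) = 0 := by
  rw [← dotProduct_pencil_mulVec, dotProduct_mulVec, ← mulVec_transpose, he, zero_dotProduct]

theorem pencil_pairing_eq_zero_of_mulVec {a b c : R}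
    (hh : (a • D₀ + b • D₁ + c • D₂) *ᵥ h = 0) :
    a * (e ⬝ᵥ D₀ *ᵥ h) + b * (e ⬝ᵥ D₁ *ᵥ h) + c * (e ⬝ᵥ D₂ *ᵥ h) = 0 := by
  rw [← dotProduct_pencil_mulVec, hh, dotProduct_zero]

end Pencil

theorem cross_mul_eq_of_dot_eq_zero {R : Type*} [CommRing R] {x₀ x₁ x₂ y₀ y₁ y₂ d₀ d₁ d₂ : R}
    (hx : x₀ * d₀ + x₁ * d₁ + x₂ * d₂ = 0) (hy : y₀ * d₀ + y₁ * d₁ + y₂ * d₂ = 0) :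
    (x₁ * y₂ - x₂ * y₁) * d₁ = (x₂ * y₀ - x₀ * y₂) * d₀ ∧
      (x₁ * y₂ - x₂ * y₁) * d₂ = (x₀ * y₁ - x₁ * y₀) * d₀ :=
  ⟨by linear_combination y₂ * hx - x₂ * hy, by linear_combination x₁ * hy - y₁ * hx⟩

theorem mul_blownPairing_of_isBezoutDecomp {m n : ℕ} {D₀ D₁ D₂ : Matrix (Fin m) (Fin m) ℂ}
    {p q : MvPolynomial (Fin 3) ℂ} {β0 β1 β2 : TriIdx (n - 1) → TriIdx (n - 1) → ℂ}
    (hβ : IsBezoutDecomp n p q β0 β1 β2) {x₀ x₁ x₂ y₀ y₁ y₂ : ℂ} {e h : Fin m → ℂ}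
    (he : (x₀ • D₀ + x₁ • D₁ + x₂ • D₂)ᵀ *ᵥ e = 0)
    (hh : (y₀ • D₀ + y₁ • D₁ + y₂ • D₂) *ᵥ h = 0) :
    (x₁ * y₂ - x₂ * y₁) * blownPairing m n D₀ D₁ D₂ β0 β1 β2 x₀ x₁ x₂ y₀ y₁ y₂ e h =
      (e ⬝ᵥ D₀ *ᵥ h) *
        (MvPolynomial.eval ![x₀, x₁, x₂] p * MvPolynomial.eval ![y₀, y₁, y₂] q -
          MvPolynomial.eval ![x₀, x₁, x₂] q * MvPolynomial.eval ![y₀, y₁, y₂] p) := by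
  obtain ⟨hd₁, hd₂⟩ := cross_mul_eq_of_dot_eq_zero
    (pencil_pairing_eq_zero_of_transpose_mulVec he) (pencil_pairing_eq_zero_of_mulVec hh)
  rw [hβ.2.2.2, blownPairing, Finset.mul_sum, Finset.mul_sum]
  refine Finset.sum_congr rfl fun i _ => ?_
  rw [Finset.mul_sum, Finset.mul_sum]
  refine Finset.sum_congr rfl fun j _ => ?_
  linear_combination (x₀ ^ i.1.1 * x₁ ^ i.1.2.1 * x₂ ^ i.1.2.2) *
    (y₀ ^ j.1.1 * y₁ ^ j.1.2.1 * y₂ ^ j.1.2.2) * (β1 i j * hd₁ + β2 i j * hd₂)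

theorem vandermonde_bezout_image_pairing_vanishes
    (m n : ℕ)
    (D₀ D₁ D₂ : Matrix (Fin m) (Fin m) ℂ)
    (p₀ p₁ p₂ : MvPolynomial (Fin 3) ℂ)
    (β120 β121 β122 β200 β201 β202 β010 β011 β012 :
      TriIdx (n - 1) → TriIdx (n - 1) → ℂ)
    (hβ12 : IsBezoutDecomp n p₁ p₂ β120 β121 β122)
    (hβ20 : IsBezoutDecomp n p₂ p₀ β200 β201 β202)
    (hβ01 : IsBezoutDecomp n p₀ p₁ β010 β011 β012)
    (x₀ x₁ x₂ y₀ y₁ y₂ : ℂ) (e h : Fin m → ℂ)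
    (he : (x₀ • D₀ + x₁ • D₁ + x₂ • D₂)ᵀ.mulVec e = 0)
    (hh : (y₀ • D₀ + y₁ • D₁ + y₂ • D₂).mulVec h = 0) :
    (x₁ * y₂ - x₂ * y₁) *
        (MvPolynomial.eval ![x₀, x₁, x₂] p₀ *
            blownPairing m n D₀ D₁ D₂ β120 β121 β122 x₀ x₁ x₂ y₀ y₁ y₂ e h +
          MvPolynomial.eval ![x₀, x₁, x₂] p₁ *
            blownPairing m n D₀ D₁ D₂ β200 β201 β202 x₀ x₁ x₂ y₀ y₁ y₂ e h +
          MvPolynomial.eval ![x₀, x₁, x₂] p₂ *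
            blownPairing m n D₀ D₁ D₂ β010 β011 β012 x₀ x₁ x₂ y₀ y₁ y₂ e h) = 0 ∧
      (x₁ * y₂ - x₂ * y₁ ≠ 0 →
        MvPolynomial.eval ![x₀, x₁, x₂] p₀ *
            blownPairing m n D₀ D₁ D₂ β120 β121 β122 x₀ x₁ x₂ y₀ y₁ y₂ e h +
          MvPolynomial.eval ![x₀, x₁, x₂] p₁ *
            blownPairing m n D₀ D₁ D₂ β200 β201 β202 x₀ x₁ x₂ y₀ y₁ y₂ e h +
          MvPolynomial.eval ![x₀, x₁, x₂] p₂ *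
            blownPairing m n D₀ D₁ D₂ β010 β011 β012 x₀ x₁ x₂ y₀ y₁ y₂ e h = 0) := by
  have h12 := mul_blownPairing_of_isBezoutDecomp hβ12 he hh
  have h20 := mul_blownPairing_of_isBezoutDecomp hβ20 he hh
  have h01 := mul_blownPairing_of_isBezoutDecomp hβ01 he hh
  refine (fun hcyclic => ⟨hcyclic, fun hc => (mul_eq_zero.mp hcyclic).resolve_left hc⟩) ?_
  linear_combination MvPolynomial.eval ![x₀, x₁, x₂] p₀ * h12 +
    MvPolynomial.eval ![x₀, x₁, x₂] p₁ * h20 + MvPolynomial.eval ![x₀, x₁, x₂] p₂ * h01
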